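/- Let L_2 be the 7-dimensional complex Lie algebra with basis x_1, …, x_7 and non-trivial brackets [x_1,x_2]=x_3, [x_1,x_3]=x_4, [x_1,x_7]=−x_1, [x_2,x_6]=−x_2, [x_3,x_6]=−x_3, [x_3,x_7]=−x_3, [x_4,x_6]=−x_4, [x_4,x_7]=−2x_4, [x_6,x_7]=x_5. For x ∈ ℂ^7 let A_x be the 7×7 skew-symmetric matrix with (i,j) entry Σ_k c_{ij}^k x_k, where c_{ij}^k are the structure constants of L_2, and let R = max_{y ∈ ℂ^7} rank A_y. Then for every (x, a) ∈ ℂ^7 × ℂ^7 there exists (α, β) ∈ ℂ² with (α, β) ≠ (0, 0) such that rank(αA_x + βA_a) < R. (Together with R < 7, forced since 7 is odd, this shows the generic pencil contains both Jordan and Kronecker blocks, i.e. L_2 is of mixed type.) -/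

import Mathlib

/-!
Indices are 0-based, so index 4 is the basis vector `x₅`, which is central: row and column 4 of
`A_y` vanish and `rank A_y` is the rank of the complementary 6×6 block `M_y`. That block is
invertible for `y = (1, 1, 0, 1, 0, 0, 0)`, so `R ≥ 6`. Over `ℂ` every pencil `α M_x + β M_a` of
square matrices has a singular member with `(α, β) ≠ 0` (either `M_a` is singular, or take an
eigenvalue of `M_a⁻¹ M_x`), and then `rank (α A_x + β A_a) ≤ 5 < R`.
-/

open Matrix

noncomputable section

/-- The skew-symmetric matrix `A_x` (with `(i,j)` entry `Σ_k c_ij^k x_k`) of the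
7-dimensional complex Lie algebra `L2` with non-trivial brackets
`[x₁,x₂]=x₃, [x₁,x₃]=x₄, [x₁,x₇]=-x₁, [x₂,x₆]=-x₂, [x₃,x₆]=-x₃, [x₃,x₇]=-x₃, [x₄,x₆]=-x₄, [x₄,x₇]=-2x₄, [x₆,x₇]=x₅`. -/
def L2mat (x : Fin 7 → ℂ) : Matrix (Fin 7) (Fin 7) ℂ :=
  !![0, x 2, x 3, 0, 0, 0, -x 0;
     -x 2, 0, 0, 0, 0, -x 1, 0;
     -x 3, 0, 0, 0, 0, -x 2, -x 2;
     0, 0, 0, 0, 0, -x 3, -2 * x 3;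
     0, 0, 0, 0, 0, 0, 0;
     0, x 1, x 2, x 3, 0, 0, x 4;
     x 0, 0, x 2, 2 * x 3, 0, -x 4, 0]

namespace Matrix

variable {K m n m₀ n₀ : Type*} [Fintype n]

theorem rank_le_rank_submatrix_of_row_eq_zero {R : Type*} [CommSemiring R] [StrongRankCondition R]
    [Fintype m₀] (A : Matrix m n R) (e : m₀ ↪ m) (h : ∀ i ∉ Set.range e, A i = 0) :
    A.rank ≤ (A.submatrix e id).rank := by
  classical
  let P : Matrix m m₀ R := of fun i a => if i = e a then 1 else 0
  have hA : P * A.submatrix e id = A := by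
    ext i j
    simp only [P, mul_apply, of_apply, submatrix_apply, id, ite_mul, one_mul, zero_mul]
    by_cases hi : i ∈ Set.range e
    · obtain ⟨a, rfl⟩ := hi
      simp [e.injective.eq_iff]
    · simp only [h i hi, Pi.zero_apply]
      exact Finset.sum_eq_zero fun a _ => if_neg fun hia => hi ⟨a, hia.symm⟩
  calc A.rank = (P * A.submatrix e id).rank := by rw [hA]
    _ ≤ (A.submatrix e id).rank := rank_mul_le_right _ _

theorem rank_le_rank_submatrix_of_eq_zero [Field K] [Fintype m] [Fintype m₀] [Fintype n₀]
    (A : Matrix m n K) (e : m₀ ↪ m) (f : n₀ ↪ n)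
    (hrow : ∀ i ∉ Set.range e, A i = 0) (hcol : ∀ j ∉ Set.range f, ∀ i, A i j = 0) :
    A.rank ≤ (A.submatrix e f).rank := by
  have hrow' : ∀ i ∉ Set.range e, A.submatrix id f i = 0 := fun i hi => by
    ext j; simp [hrow i hi]
  calc A.rank = Aᵀ.rank := (rank_transpose A).symm
    _ ≤ (Aᵀ.submatrix f id).rank :=
        rank_le_rank_submatrix_of_row_eq_zero _ f fun j hj => funext fun i => hcol j hj i
    _ = (A.submatrix id f).rank := by rw [← transpose_submatrix, rank_transpose]
    _ ≤ (A.submatrix e f).rank := rank_le_rank_submatrix_of_row_eq_zero _ e hrow'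

theorem rank_lt_card_of_mulVec_eq_zero [Field K] (A : Matrix m n K) {v : n → K} (hv : v ≠ 0)
    (h : A *ᵥ v = 0) : A.rank < Fintype.card n := by
  have hker : 0 < Module.finrank K (LinearMap.ker A.mulVecLin) :=
    Module.finrank_pos_iff_exists_ne_zero.mpr
      ⟨⟨v, LinearMap.mem_ker.mpr h⟩, fun h0 => hv (congrArg Subtype.val h0)⟩
  have := LinearMap.finrank_range_add_finrank_ker A.mulVecLin
  rw [Module.finrank_fintype_fun_eq_card] at this
  rw [rank]
  omega

theorem exists_pencil_mulVec_eq_zero [Field K] [IsAlgClosed K] [Nonempty n] [DecidableEq n]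
    (A B : Matrix n n K) :
    ∃ α β : K, (α, β) ≠ (0, 0) ∧ ∃ v ≠ 0, (α • A + β • B) *ᵥ v = 0 := by
  by_cases hB : B.det = 0
  · obtain ⟨v, hv, hBv⟩ := exists_mulVec_eq_zero_iff.mpr hB
    exact ⟨0, 1, by simp, v, hv, by simpa using hBv⟩
  obtain ⟨c, hc⟩ := Module.End.exists_eigenvalue (toLin' (B⁻¹ * A))
  obtain ⟨v, hv_mem, hv⟩ := hc.exists_hasEigenvector
  have hAv : A *ᵥ v = c • (B *ᵥ v) := by
    have hBAv : (B⁻¹ * A) *ᵥ v = c • v := by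
      simpa only [toLin'_apply] using Module.End.mem_eigenspace_iff.mp hv_mem
    rw [← mulVec_smul, ← hBAv, mulVec_mulVec, ← Matrix.mul_assoc,
      mul_nonsing_inv _ (isUnit_iff_ne_zero.mpr hB), Matrix.one_mul]
  refine ⟨1, -c, by simp, v, hv, ?_⟩
  rw [add_mulVec, one_smul, smul_mulVec, hAv, neg_smul, add_neg_cancel]

end Matrix

lemma L2mat_smul_add_smul (α β : ℂ) (x a : Fin 7 → ℂ) :
    L2mat (α • x + β • a) = α • L2mat x + β • L2mat a := by
  ext i j
  fin_cases i <;> fin_cases j <;> simp [L2mat] <;> ring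

lemma L2mat_row_four (y : Fin 7 → ℂ) : L2mat y 4 = 0 := by
  ext j; fin_cases j <;> rfl

lemma L2mat_col_four (y : Fin 7 → ℂ) (i : Fin 7) : L2mat y i 4 = 0 := by
  fin_cases i <;> rfl

lemma L2mat_witness_submatrix :
    (L2mat ![1, 1, 0, 1, 0, 0, 0]).submatrix ![0, 1, 2, 3, 5, 6] ![0, 1, 2, 3, 5, 6] =
      !![0, 0, 1, 0, 0, -1;
         0, 0, 0, 0, -1, 0;
         -1, 0, 0, 0, 0, 0;
         0, 0, 0, 0, -1, -2;
         0, 1, 0, 1, 0, 0;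
         1, 0, 0, 2, 0, 0] := by
  ext i j
  fin_cases i <;> fin_cases j <;> simp [L2mat]

lemma six_le_rank_L2mat : 6 ≤ (L2mat ![1, 1, 0, 1, 0, 0, 0]).rank := by
  let Minv : Matrix (Fin 6) (Fin 6) ℂ :=
    !![0, 0, -1, 0, 0, 0;
       0, 0, -1/2, 0, 1, -1/2;
       1, 1/2, 0, -1/2, 0, 0;
       0, 0, 1/2, 0, 0, 1/2;
       0, -1, 0, 0, 0, 0;
       0, 1/2, 0, -1/2, 0, 0]
  have hinv :
      (L2mat ![1, 1, 0, 1, 0, 0, 0]).submatrix ![0, 1, 2, 3, 5, 6] ![0, 1, 2, 3, 5, 6] * Minv = 1 := by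
    rw [L2mat_witness_submatrix]
    ext i j
    fin_cases i <;> fin_cases j <;> simp [Minv, mul_apply, Fin.sum_univ_six, one_apply] <;> norm_num
  calc 6 = (1 : Matrix (Fin 6) (Fin 6) ℂ).rank := by simp
    _ = _ := by rw [← hinv]
    _ ≤ _ := rank_mul_le_left _ _
    _ ≤ _ := rank_submatrix_le _ _ _

/-- With `R = max_y rank A_y`, for every pair `(x, a)` there exists `(α, β) ≠ (0, 0)`
with `rank (α A_x + β A_a) < R`: the generic pencil has Jordan blocks, and together
with `R < 7` this shows `L2` is of mixed type. -/
theorem L2_mixed_type (R : ℕ)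
    (hR : IsGreatest {r : ℕ | ∃ y : Fin 7 → ℂ, (L2mat y).rank = r} R) :
    ∀ x a : Fin 7 → ℂ, ∃ α β : ℂ, (α, β) ≠ (0, 0) ∧
      (α • L2mat x + β • L2mat a).rank < R := by
  intro x a
  have hR6 : 6 ≤ R := six_le_rank_L2mat.trans (hR.2 ⟨_, rfl⟩)
  let e := Fin.succAboveEmb (4 : Fin 7)
  have he : ∀ i ∉ Set.range e, i = 4 := fun i hi => by simpa [e] using hi
  obtain ⟨α, β, hαβ, v, hv, hker⟩ :=
    exists_pencil_mulVec_eq_zero ((L2mat x).submatrix e e) ((L2mat a).submatrix e e)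
  refine ⟨α, β, hαβ, ?_⟩
  rw [← L2mat_smul_add_smul]
  calc (L2mat (α • x + β • a)).rank
      ≤ ((L2mat (α • x + β • a)).submatrix e e).rank :=
        rank_le_rank_submatrix_of_eq_zero _ e e (fun i hi => he i hi ▸ L2mat_row_four _)
          (fun j hj i => he j hj ▸ L2mat_col_four _ i)
    _ < Fintype.card (Fin 6) := by
        refine rank_lt_card_of_mulVec_eq_zero _ hv ?_
        rwa [L2mat_smul_add_smul, submatrix_add, submatrix_smul, submatrix_smul]
    _ ≤ R := by simpa using hR6
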